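/- arXiv:2310.12403 — 7 statements merged into one kernel-verified Lean document; each statement's English description precedes it below -/
import Mathlib

section
/- If S is a uniformly random subset of V of size n, then the expected work per seed E[|φ(S)|]/n is a monotonically nonincreasing function of n; that is, for n ≥ 2, E[|φ(S_n)|]/n ≤ E[|φ(S_{n−1})|]/(n−1), where S_m denotes a uniformly random m-element subset of V. -/
open Finset

variable {α : Type*} [DecidableEq α] [Fintype α]

/-- Expected size of `φ(S_n)` for a uniformly random `n`-subset `S_n` of the vertex set. -/
def Ef (φ : Finset α → Finset α) (n : ℕ) : ℚ :=
  (∑ S ∈ powersetCard n (univ : Finset α), ((φ S).card : ℚ)) /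
    ((powersetCard n (univ : Finset α)).card : ℚ)

lemma key1 (φ : Finset α → Finset α)
    (hφ : ∀ S : Finset α, φ S = S.biUnion (fun s => φ {s}))
    (S : Finset α) :
    (S.card - 1) * (φ S).card ≤ ∑ s ∈ S, (φ (S.erase s)).card := by
  have hsub : ∀ s ∈ S, φ (S.erase s) ⊆ φ S := by
    intro s hs
    rw [hφ (S.erase s), hφ S]
    exact biUnion_subset_biUnion_of_subset_left _ (erase_subset s S)
  calc (S.card - 1) * (φ S).card = ∑ x ∈ φ S, (S.card - 1) := by
        rw [sum_const, smul_eq_mul, mul_comm]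
    _ ≤ ∑ x ∈ φ S, (S.filter (fun s => x ∈ φ (S.erase s))).card := by
        apply sum_le_sum
        intro x hx
        rw [hφ S] at hx
        obtain ⟨t, ht, hxt⟩ := mem_biUnion.mp hx
        have hss : S.erase t ⊆ S.filter (fun s => x ∈ φ (S.erase s)) := by
          intro s hsn
          rw [mem_filter]
          refine ⟨mem_of_mem_erase hsn, ?_⟩
          rw [hφ (S.erase s)]
          exact mem_biUnion.mpr
            ⟨t, mem_erase.mpr ⟨fun h => (mem_erase.mp hsn).1 h.symm, ht⟩, hxt⟩
        calc S.card - 1 = (S.erase t).card := (card_erase_of_mem ht).symm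
          _ ≤ _ := card_le_card hss
    _ = ∑ x ∈ φ S, ∑ s ∈ S, if x ∈ φ (S.erase s) then 1 else 0 := by
        refine sum_congr rfl fun x _ => ?_
        rw [card_filter]
    _ = ∑ s ∈ S, ∑ x ∈ φ S, if x ∈ φ (S.erase s) then 1 else 0 := sum_comm
    _ = ∑ s ∈ S, (φ (S.erase s)).card := by
        refine sum_congr rfl fun s hs => ?_
        rw [← card_filter]
        congr 1
        rw [Finset.filter_mem_eq_inter, inter_eq_right]
        exact hsub s hs

lemma key2 (f : Finset α → ℕ) (n : ℕ) (hn : 1 ≤ n) :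
    ∑ S ∈ powersetCard n (univ : Finset α), ∑ s ∈ S, f (S.erase s)
      = (Fintype.card α - (n - 1)) * ∑ T ∈ powersetCard (n - 1) (univ : Finset α), f T := by
  rw [← sum_sigma (powersetCard n (univ : Finset α)) (fun S => S)
      (fun p => f (p.1.erase p.2))]
  have : ∑ T ∈ powersetCard (n - 1) (univ : Finset α), (Fintype.card α - (n - 1)) * f T
      = ∑ p ∈ (powersetCard (n - 1) (univ : Finset α)).sigma (fun T => Tᶜ), f p.1 := by
    rw [sum_sigma]
    refine sum_congr rfl fun T hT => ?_
    show _ = ∑ _s ∈ Tᶜ, f T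
    rw [sum_const, smul_eq_mul, card_compl, (mem_powersetCard_univ.mp hT)]
  rw [mul_sum, this]
  refine sum_nbij' (fun p => ⟨p.1.erase p.2, p.2⟩) (fun p => ⟨insert p.2 p.1, p.2⟩)
    ?_ ?_ ?_ ?_ ?_
  · rintro ⟨S, s⟩ hp
    simp only [mem_sigma, mem_powersetCard_univ] at hp ⊢
    refine ⟨?_, ?_⟩
    · rw [card_erase_of_mem hp.2, hp.1]
    · simp [mem_compl]
  · rintro ⟨T, x⟩ hp
    simp only [mem_sigma, mem_powersetCard_univ, mem_compl] at hp ⊢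
    refine ⟨?_, mem_insert_self _ _⟩
    rw [card_insert_of_notMem hp.2, hp.1]
    omega
  · rintro ⟨S, s⟩ hp
    simp only [mem_sigma] at hp
    simp [insert_erase hp.2]
  · rintro ⟨T, x⟩ hp
    simp only [mem_sigma, mem_compl] at hp
    simp [erase_insert hp.2]
  · rintro ⟨S, s⟩ hp
    rfl

theorem work_per_seed_nonincreasing (φ : Finset α → Finset α)
    (hφ : ∀ S : Finset α, φ S = S.biUnion (fun s => φ {s}))
    (n : ℕ) (h2 : 2 ≤ n) (hn : n ≤ Fintype.card α) :
    Ef φ n / (n : ℚ) ≤ Ef φ (n - 1) / ((n : ℚ) - 1) := by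
  set m := Fintype.card α with hm
  have hn1 : n - 1 ≤ m := by omega
  have hCn : (powersetCard n (univ : Finset α)).card = m.choose n := by
    rw [card_powersetCard, card_univ]
  have hCn' : (powersetCard (n - 1) (univ : Finset α)).card = m.choose (n - 1) := by
    rw [card_powersetCard, card_univ]
  have hCnpos : 0 < m.choose n := Nat.choose_pos hn
  have hCn'pos : 0 < m.choose (n - 1) := Nat.choose_pos hn1
  -- key natural-number inequality
  have hkey : (n - 1) * ∑ S ∈ powersetCard n (univ : Finset α), (φ S).card
      ≤ (m - (n - 1)) * ∑ T ∈ powersetCard (n - 1) (univ : Finset α), (φ T).card := by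
    rw [← key2 (fun T => (φ T).card) n (by omega)]
    rw [mul_sum]
    refine sum_le_sum fun S hS => ?_
    have := key1 φ hφ S
    rwa [mem_powersetCard_univ.mp hS] at this
  -- binomial identity
  have hbi : m.choose n * n = m.choose (n - 1) * (m - (n - 1)) := by
    have := Nat.choose_succ_right_eq m (n - 1)
    have h : n - 1 + 1 = n := by omega
    rwa [h] at this
  -- move to ℚ
  have hq1 : ((n : ℚ) - 1) = ((n - 1 : ℕ) : ℚ) := by
    push_cast [Nat.cast_sub (by omega : 1 ≤ n)]; ring
  have hd1 : (0 : ℚ) < (m.choose n : ℚ) * (n : ℚ) := by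
    have h1 : (0 : ℚ) < (m.choose n : ℚ) := by exact_mod_cast hCnpos
    have h2' : (0 : ℚ) < (n : ℚ) := by exact_mod_cast (by omega : 0 < n)
    exact mul_pos h1 h2'
  have hd2 : (0 : ℚ) < (m.choose (n - 1) : ℚ) * ((n - 1 : ℕ) : ℚ) := by
    have h1 : (0 : ℚ) < (m.choose (n - 1) : ℚ) := by exact_mod_cast hCn'pos
    have h2' : (0 : ℚ) < ((n - 1 : ℕ) : ℚ) := by exact_mod_cast (by omega : 0 < n - 1)
    exact mul_pos h1 h2'
  unfold Ef
  rw [hCn, hCn', hq1, div_div, div_div]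
  rw [div_le_div_iff₀ hd1 hd2]
  have hcast : ((n - 1 : ℕ) : ℚ) * ∑ S ∈ powersetCard n (univ : Finset α), ((φ S).card : ℚ)
      ≤ ((m - (n - 1) : ℕ) : ℚ) * ∑ T ∈ powersetCard (n - 1) (univ : Finset α), ((φ T).card : ℚ) := by
    exact_mod_cast hkey
  calc (∑ S ∈ powersetCard n (univ : Finset α), ((φ S).card : ℚ))
        * ((m.choose (n - 1) : ℚ) * ((n - 1 : ℕ) : ℚ))
      = (m.choose (n - 1) : ℚ) * (((n - 1 : ℕ) : ℚ)
          * ∑ S ∈ powersetCard n (univ : Finset α), ((φ S).card : ℚ)) := by ring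
    _ ≤ (m.choose (n - 1) : ℚ) * (((m - (n - 1) : ℕ) : ℚ)
          * ∑ T ∈ powersetCard (n - 1) (univ : Finset α), ((φ T).card : ℚ)) := by
        have hpos : (0 : ℚ) ≤ (m.choose (n - 1) : ℚ) := by positivity
        exact mul_le_mul_of_nonneg_left hcast hpos
    _ = (∑ T ∈ powersetCard (n - 1) (univ : Finset α), ((φ T).card : ℚ))
          * (((m.choose (n - 1)) * (m - (n - 1)) : ℕ) : ℚ) := by push_cast; ring
    _ = (∑ T ∈ powersetCard (n - 1) (univ : Finset α), ((φ T).card : ℚ))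
          * ((m.choose n : ℚ) * (n : ℚ)) := by rw [← hbi]; push_cast; ring
end

section
/- For a union-expansion φ and a finite set S with |S| ≥ 2, Σ_{s ∈ S} (|T(S)| − |T(S \ {s})|) = |T(S)| − 2|T₂(S)|, where T(S) counts elements covered by exactly one singleton expansion and T₂(S) counts elements covered by exactly two. -/
variable {α : Type*} [DecidableEq α]

/-- Elements of `φ S` covered by exactly one singleton expansion. -/
def Tset (φ : Finset α → Finset α) (S : Finset α) : Finset α :=
  (φ S).filter (fun w => (S.filter (fun s => w ∈ φ {s})).card = 1)

/-- Elements of `φ S` covered by exactly two singleton expansions. -/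
def T2set (φ : Finset α → Finset α) (S : Finset α) : Finset α :=
  (φ S).filter (fun w => (S.filter (fun s => w ∈ φ {s})).card = 2)

theorem sum_T_diff_eq (φ : Finset α → Finset α)
    (hφ : ∀ S : Finset α, φ S = S.biUnion (fun s => φ {s})) (S : Finset α)
    (hS : 2 ≤ S.card) :
    ∑ s ∈ S, (((Tset φ S).card : ℤ) - ((Tset φ (S.erase s)).card : ℤ)) =
      ((Tset φ S).card : ℤ) - 2 * ((T2set φ S).card : ℤ) := by
  classical
  -- membership characterization
  have hmem : ∀ (U : Finset α) (w : α), w ∈ φ U ↔ ∃ t ∈ U, w ∈ φ {t} := by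
    intro U w
    rw [hφ U, Finset.mem_biUnion]
  -- key rewriting of each erased term
  have key : ∀ s ∈ S, (Tset φ (S.erase s)).card
      = ((φ S).filter (fun w => (((S.filter (fun t => w ∈ φ {t})).erase s)).card = 1)).card := by
    intro s hs
    congr 1
    ext w
    simp only [Tset, Finset.mem_filter, Finset.filter_erase]
    constructor
    · rintro ⟨hw, hc⟩
      refine ⟨?_, hc⟩
      rw [hmem] at hw ⊢
      obtain ⟨t, ht, hwt⟩ := hw
      exact ⟨t, Finset.mem_of_mem_erase ht, hwt⟩
    · rintro ⟨hw, hc⟩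
      refine ⟨?_, hc⟩
      have : ((S.filter (fun t => w ∈ φ {t})).erase s).Nonempty := by
        rw [← Finset.card_pos, hc]; norm_num
      obtain ⟨t, ht⟩ := this
      have ht' := Finset.mem_of_mem_erase ht
      rw [Finset.mem_filter] at ht'
      rw [hmem]
      exact ⟨t, Finset.mem_erase.2 ⟨(Finset.mem_erase.1 ht).1, ht'.1⟩, ht'.2⟩
  -- sum of erased terms
  have sum_erased : ∑ s ∈ S, ((Tset φ (S.erase s)).card : ℤ)
      = ((S.card : ℤ) - 1) * ((Tset φ S).card : ℤ) + 2 * ((T2set φ S).card : ℤ) := by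
    calc ∑ s ∈ S, ((Tset φ (S.erase s)).card : ℤ)
        = ∑ s ∈ S, ∑ w ∈ φ S,
            (if (((S.filter (fun t => w ∈ φ {t})).erase s)).card = 1 then (1:ℤ) else 0) := by
          refine Finset.sum_congr rfl fun s hs => ?_
          rw [key s hs, Finset.sum_boole]
      _ = ∑ w ∈ φ S, ∑ s ∈ S,
            (if (((S.filter (fun t => w ∈ φ {t})).erase s)).card = 1 then (1:ℤ) else 0) :=
          Finset.sum_comm
      _ = ∑ w ∈ φ S, (if (S.filter (fun t => w ∈ φ {t})).card = 1 then ((S.card : ℤ) - 1)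
            else if (S.filter (fun t => w ∈ φ {t})).card = 2 then 2 else 0) := by
          refine Finset.sum_congr rfl fun w hw => ?_
          set F := S.filter (fun t => w ∈ φ {t}) with hF
          have hFS : F ⊆ S := Finset.filter_subset _ _
          have hcard : ∀ s, ((F.erase s).card = 1) ↔
              ((F.card = 1 ∧ s ∉ F) ∨ (F.card = 2 ∧ s ∈ F)) := by
            intro s
            by_cases hsF : s ∈ F
            · rw [Finset.card_erase_of_mem hsF]
              have h1 : 1 ≤ F.card := Finset.card_pos.2 ⟨s, hsF⟩
              simp only [hsF, not_true_eq_false, and_false, false_or, and_true]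
              omega
            · rw [Finset.erase_eq_of_notMem hsF]
              simp [hsF]
          rw [Finset.sum_congr rfl (fun s _ => if_congr (hcard s) rfl rfl), Finset.sum_boole]
          by_cases h1 : F.card = 1
          · simp only [h1]
            norm_num
            have hsd : S.filter (fun x => x ∉ F) = S \ F := by
              ext x; simp [Finset.mem_sdiff]
            rw [hsd, Finset.card_sdiff_of_subset hFS, h1]
            have : 1 ≤ S.card := by omega
            omega
          · by_cases h2 : F.card = 2
            · simp only [h1, h2]
              norm_num
              have hin : S.filter (fun x => x ∈ F) = F := by
                rw [Finset.filter_mem_eq_inter, Finset.inter_eq_right.2 hFS]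
              rw [hin, h2]
              norm_num
            · simp only [h1, h2]
              norm_num
      _ = ((S.card : ℤ) - 1) * ((Tset φ S).card : ℤ) + 2 * ((T2set φ S).card : ℤ) := by
          have : ∀ w ∈ φ S, (if (S.filter (fun t => w ∈ φ {t})).card = 1 then ((S.card : ℤ) - 1)
              else if (S.filter (fun t => w ∈ φ {t})).card = 2 then 2 else 0)
              = ((S.card : ℤ) - 1) * (if (S.filter (fun t => w ∈ φ {t})).card = 1 then (1:ℤ) else 0)
                + 2 * (if (S.filter (fun t => w ∈ φ {t})).card = 2 then (1:ℤ) else 0) := by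
            intro w hw
            by_cases h1 : (S.filter (fun t => w ∈ φ {t})).card = 1
            · simp [h1]
            · by_cases h2 : (S.filter (fun t => w ∈ φ {t})).card = 2 <;> simp [h1, h2]
          rw [Finset.sum_congr rfl this, Finset.sum_add_distrib, ← Finset.mul_sum, ← Finset.mul_sum,
            Finset.sum_boole, Finset.sum_boole]
          rfl
  rw [Finset.sum_sub_distrib, sum_erased, Finset.sum_const, nsmul_eq_mul]
  ring
end

section
/- For a union-expansion φ and |S| ≥ 2, |T(S)|/|S| ≤ (1/|S|) Σ_{s ∈ S} |T(S \ {s})| / (|S| − 1); i.e. the normalized uniquely-covered count |T(S)|/|S| does not increase when passing from subsets of size |S|−1 to S. -/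
variable {α : Type*} [DecidableEq α]

theorem normalized_unique_cover_nonincreasing (φ : Finset α → Finset α)
    (hφ : ∀ S : Finset α, φ S = S.biUnion (fun s => φ {s})) (S : Finset α)
    (hS : 2 ≤ S.card) :
    ((Tset φ S).card : ℚ) / (S.card : ℚ) ≤
      (1 / (S.card : ℚ)) *
        ∑ s ∈ S, ((Tset φ (S.erase s)).card : ℚ) / ((S.card : ℚ) - 1) := by
  have key : (S.card - 1) * (Tset φ S).card ≤ ∑ s ∈ S, (Tset φ (S.erase s)).card := by
    have hsub : ∀ s ∈ S, (Tset φ S).filter (fun w => w ∉ φ {s}) ⊆ Tset φ (S.erase s) := by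
      intro s hs w hw
      simp only [Tset, Finset.mem_filter] at hw ⊢
      obtain ⟨⟨hwφ, hcard⟩, hws⟩ := hw
      have hne : (S.filter (fun t => w ∈ φ {t})).Nonempty := by
        rw [← Finset.card_pos, hcard]; norm_num
      obtain ⟨t, ht⟩ := hne
      rw [Finset.mem_filter] at ht
      have hts : t ≠ s := fun h => hws (h ▸ ht.2)
      have hmem : s ∉ S.filter (fun t => w ∈ φ {t}) := by
        simp [hws]
      refine ⟨?_, ?_⟩
      · rw [hφ]
        exact Finset.mem_biUnion.2 ⟨t, Finset.mem_erase.2 ⟨hts, ht.1⟩, ht.2⟩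
      · rw [Finset.filter_erase, Finset.erase_eq_of_notMem hmem, hcard]
    calc (S.card - 1) * (Tset φ S).card
        = ∑ _w ∈ Tset φ S, (S.card - 1) := by
          rw [Finset.sum_const, smul_eq_mul, mul_comm]
      _ = ∑ w ∈ Tset φ S, (S.filter (fun s => w ∉ φ {s})).card := by
          apply Finset.sum_congr rfl
          intro w hw
          simp only [Tset, Finset.mem_filter] at hw
          have h2 := Finset.card_filter_add_card_filter_not
            (s := S) (p := fun s => w ∈ φ {s})
          omega
      _ = ∑ w ∈ Tset φ S, ∑ s ∈ S, (if w ∉ φ {s} then 1 else 0) := by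
          simp [Finset.card_filter]
      _ = ∑ s ∈ S, ∑ w ∈ Tset φ S, (if w ∉ φ {s} then 1 else 0) := Finset.sum_comm
      _ = ∑ s ∈ S, ((Tset φ S).filter (fun w => w ∉ φ {s})).card := by
          simp [Finset.card_filter]
      _ ≤ ∑ s ∈ S, (Tset φ (S.erase s)).card :=
          Finset.sum_le_sum fun s hs => Finset.card_le_card (hsub s hs)
  have hn : (2:ℚ) ≤ (S.card : ℚ) := by exact_mod_cast hS
  have hn0 : (0:ℚ) < (S.card : ℚ) := by linarith
  have hn1 : (0:ℚ) < (S.card : ℚ) - 1 := by linarith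
  have key' : ((S.card : ℚ) - 1) * ((Tset φ S).card : ℚ)
      ≤ ∑ s ∈ S, ((Tset φ (S.erase s)).card : ℚ) := by
    have h1 : 1 ≤ S.card := by omega
    have h := (Nat.cast_le (α := ℚ)).2 key
    push_cast [Nat.cast_sub h1] at h
    linarith
  have hR : (1 / (S.card : ℚ)) * ∑ s ∈ S, ((Tset φ (S.erase s)).card : ℚ) / ((S.card : ℚ) - 1)
      = (∑ s ∈ S, ((Tset φ (S.erase s)).card : ℚ)) / ((S.card : ℚ) * ((S.card : ℚ) - 1)) := by
    rw [← Finset.sum_div]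
    field_simp
  rw [hR, div_le_div_iff₀ hn0 (by positivity)]
  nlinarith [key', hn0, ((Tset φ S).card.cast_nonneg : (0:ℚ) ≤ _)]
end

section
/- Let f(n) = E[|φ(S_n)|] where S_n is a uniformly random n-subset of V. Then f satisfies the recursion f(n) = f(n−1) + E[|T(S_n)|]/n for n ≥ 1 (with f(0) = |φ(∅)| = 0), and consequently f(n) = Σ_{i=1}^n E[|T(S_i)|]/i. -/
open Finset

variable {α : Type*} [DecidableEq α] [Fintype α]

/-- `E[|T(S_n)|]` over uniformly random `n`-subsets `S_n` of the vertex set. -/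
def ET (φ : Finset α → Finset α) (n : ℕ) : ℚ :=
  (∑ S ∈ powersetCard n (univ : Finset α), ((Tset φ S).card : ℚ)) /
    ((powersetCard n (univ : Finset α)).card : ℚ)

/-! For `w ∈ φ S`, deleting `s` from `S` removes `w` from `φ S` exactly when `s` is the only
element of `S` whose image contains `w`; so `∑ s ∈ S, |φ (S \ {s})| = |S| |φ S| - |T S|`.
Summing over all `n`-sets, every `(n - 1)`-set arises as `S \ {s}` from `|V| - n + 1` pairs,
and `C(|V|, n) n = C(|V|, n - 1) (|V| - n + 1)` turns the identity into
`n f(n) = n f(n - 1) + E|T(S_n)|`. -/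

section UnionGenerated

variable {β : Type*} [DecidableEq β]

theorem sum_powersetCard_succ_sum_erase {M : Type*} [AddCommMonoid M]
    (U : Finset β) (g : Finset β → M) (n : ℕ) :
    ∑ S ∈ powersetCard (n + 1) U, ∑ s ∈ S, g (S.erase s) =
      ∑ R ∈ powersetCard n U, #(U \ R) • g R := by
  simp only [← sum_const, sum_sigma']
  refine sum_nbij' (fun p => ⟨p.1.erase p.2, p.2⟩) (fun p => ⟨insert p.2 p.1, p.2⟩)
    ?_ ?_ ?_ ?_ fun _ _ => rfl
  · rintro ⟨S, s⟩ hp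
    simp only [mem_sigma, mem_powersetCard, mem_sdiff] at hp ⊢
    obtain ⟨⟨hSU, hS⟩, hs⟩ := hp
    exact ⟨⟨(erase_subset s S).trans hSU, by rw [card_erase_of_mem hs, hS, Nat.add_sub_cancel]⟩,
      hSU hs, notMem_erase s S⟩
  · rintro ⟨R, a⟩ hp
    simp only [mem_sigma, mem_powersetCard, mem_sdiff] at hp ⊢
    obtain ⟨⟨hRU, hR⟩, haU, haR⟩ := hp
    exact ⟨⟨insert_subset haU hRU, by rw [card_insert_of_notMem haR, hR]⟩, mem_insert_self a R⟩
  · rintro ⟨S, s⟩ hp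
    simp only [mem_sigma] at hp
    simp [insert_erase hp.2]
  · rintro ⟨R, a⟩ hp
    simp only [mem_sigma, mem_sdiff] at hp
    simp [erase_insert hp.2.2]

variable {φ : Finset β → Finset β}

theorem mem_apply_erase_iff
    (hφ : ∀ S : Finset β, φ S = S.biUnion (fun s => φ {s})) {S : Finset β} {s w : β} :
    w ∈ φ (S.erase s) ↔ ¬ {t ∈ S | w ∈ φ {t}} ⊆ {s} := by
  rw [hφ, mem_biUnion, subset_singleton_iff']
  simp only [mem_erase, mem_filter]
  grind

theorem card_filter_notMem_apply_erase
    (hφ : ∀ S : Finset β, φ S = S.biUnion (fun s => φ {s})) {S : Finset β} {w : β}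
    (hw : w ∈ φ S) :
    #{s ∈ S | w ∉ φ (S.erase s)} = if #{t ∈ S | w ∈ φ {t}} = 1 then 1 else 0 := by
  have hK_ne : {t ∈ S | w ∈ φ {t}}.Nonempty := by
    rw [hφ, mem_biUnion] at hw
    obtain ⟨t, ht, hwt⟩ := hw
    exact ⟨t, mem_filter.2 ⟨ht, hwt⟩⟩
  simp only [mem_apply_erase_iff hφ, not_not, hK_ne.subset_singleton_iff]
  generalize {t ∈ S | w ∈ φ {t}} = K, (filter_subset _ S : {t ∈ S | w ∈ φ {t}} ⊆ S) = hKS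
  split_ifs with h
  · obtain ⟨u, rfl⟩ := card_eq_one.1 h
    rw [singleton_subset_iff] at hKS
    simp only [singleton_inj, filter_eq, if_pos hKS, card_singleton]
  · rw [card_eq_zero, filter_eq_empty_iff]
    rintro s - rfl
    exact h (card_singleton s)

theorem apply_subset_apply
    (hφ : ∀ S : Finset β, φ S = S.biUnion (fun s => φ {s})) {R S : Finset β} (h : R ⊆ S) :
    φ R ⊆ φ S := by
  rw [hφ R, hφ S]
  exact biUnion_subset_biUnion_of_subset_left _ h

theorem card_Tset_eq_sum_card_sdiff
    (hφ : ∀ S : Finset β, φ S = S.biUnion (fun s => φ {s})) (S : Finset β) :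
    #(Tset φ S) = ∑ s ∈ S, #(φ S \ φ (S.erase s)) :=
  calc #(Tset φ S) = ∑ w ∈ φ S, #{s ∈ S | w ∉ φ (S.erase s)} := by
        rw [Tset, card_filter]
        exact sum_congr rfl fun w hw => (card_filter_notMem_apply_erase hφ hw).symm
    _ = ∑ s ∈ S, #{w ∈ φ S | w ∉ φ (S.erase s)} :=
        sum_card_bipartiteAbove_eq_sum_card_bipartiteBelow _
    _ = ∑ s ∈ S, #(φ S \ φ (S.erase s)) := by simp only [sdiff_eq_filter]

theorem sum_card_apply_erase_add_card_Tset
    (hφ : ∀ S : Finset β, φ S = S.biUnion (fun s => φ {s})) (S : Finset β) :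
    ∑ s ∈ S, #(φ (S.erase s)) + #(Tset φ S) = #S * #(φ S) := by
  rw [card_Tset_eq_sum_card_sdiff hφ, ← sum_add_distrib, ← smul_eq_mul, ← sum_const]
  refine sum_congr rfl fun s _ => ?_
  rw [add_comm, card_sdiff_add_card_eq_card (apply_subset_apply hφ (erase_subset s S))]

end UnionGenerated

theorem sum_card_apply_powersetCard_succ {φ : Finset α → Finset α}
    (hφ : ∀ S : Finset α, φ S = S.biUnion (fun s => φ {s})) (n : ℕ) :
    (Fintype.card α - n) * ∑ R ∈ powersetCard n univ, #(φ R) +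
        ∑ S ∈ powersetCard (n + 1) univ, #(Tset φ S) =
      (n + 1) * ∑ S ∈ powersetCard (n + 1) univ, #(φ S) :=
  calc _ = ∑ S ∈ powersetCard (n + 1) univ, (∑ s ∈ S, #(φ (S.erase s)) + #(Tset φ S)) := by
        rw [sum_add_distrib, sum_powersetCard_succ_sum_erase univ (fun R => #(φ R)), mul_sum]
        congr 1
        refine sum_congr rfl fun R hR => ?_
        rw [← compl_eq_univ_sdiff, card_compl, (mem_powersetCard.1 hR).2, smul_eq_mul]
    _ = ∑ S ∈ powersetCard (n + 1) univ, (n + 1) * #(φ S) :=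
        sum_congr rfl fun S hS => by
          rw [sum_card_apply_erase_add_card_Tset hφ, (mem_powersetCard.1 hS).2]
    _ = _ := (mul_sum _ _ _).symm

theorem Ef_zero {φ : Finset α → Finset α}
    (hφ : ∀ S : Finset α, φ S = S.biUnion (fun s => φ {s})) : Ef φ 0 = 0 := by
  simp [Ef, hφ ∅]

theorem Ef_succ {φ : Finset α → Finset α}
    (hφ : ∀ S : Finset α, φ S = S.biUnion (fun s => φ {s})) {n : ℕ}
    (hn : n < Fintype.card α) :
    Ef φ (n + 1) = Ef φ n + ET φ (n + 1) / ((n + 1 : ℕ) : ℚ) := by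
  have hcount := congrArg (Nat.cast : ℕ → ℚ) (sum_card_apply_powersetCard_succ hφ n)
  have hchoose := congrArg (Nat.cast : ℕ → ℚ) (Nat.choose_succ_right_eq (Fintype.card α) n)
  push_cast [Nat.cast_sub hn.le] at hcount hchoose
  have hC : ((Fintype.card α).choose n : ℚ) ≠ 0 := by
    exact_mod_cast (Nat.choose_pos hn.le).ne'
  have hC' : ((Fintype.card α).choose (n + 1) : ℚ) ≠ 0 := by
    exact_mod_cast (Nat.choose_pos hn).ne'
  simp only [Ef, ET, card_powersetCard, card_univ]
  push_cast
  field_simp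
  linear_combination -((Fintype.card α).choose n : ℚ) * hcount -
    (∑ R ∈ powersetCard n univ, (#(φ R) : ℚ)) * hchoose

theorem Ef_recursion_general (φ : Finset α → Finset α)
    (hφ : ∀ S : Finset α, φ S = S.biUnion (fun s => φ {s})) :
    (∀ n : ℕ, 1 ≤ n → n ≤ Fintype.card α →
      Ef φ n = Ef φ (n - 1) + ET φ n / (n : ℚ)) ∧
    (∀ n : ℕ, n ≤ Fintype.card α →
      Ef φ n = ∑ i ∈ Finset.Icc 1 n, ET φ i / (i : ℚ)) := by
  refine ⟨fun n hn hnN => ?_, fun n hnN => ?_⟩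
  · obtain ⟨m, rfl⟩ := Nat.exists_eq_add_of_le' hn
    exact Ef_succ hφ hnN
  · induction n with
    | zero => simp [Ef_zero hφ]
    | succ m ih => rw [Ef_succ hφ hnN, ih (by omega), sum_Icc_succ_top (by omega)]

theorem Ef_recursion (φ : Finset α → Finset α)
    (hφ : ∀ S : Finset α, φ S = S.biUnion (fun s => φ {s}))
    (hempty : φ ∅ = ∅) :
    (∀ n : ℕ, 1 ≤ n → n ≤ Fintype.card α →
      Ef φ n = Ef φ (n - 1) + ET φ n / (n : ℚ)) ∧
    (∀ n : ℕ, n ≤ Fintype.card α →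
      Ef φ n = ∑ i ∈ Finset.Icc 1 n, ET φ i / (i : ℚ)) :=
  Ef_recursion_general φ hφ
end

section
/- The function f(n) = E[|φ(S_n)|] is concave in n on {0, 1, ..., |V|}: its forward differences f(n) − f(n−1) are nonincreasing in n. -/
open Finset

variable {α : Type*} [DecidableEq α] [Fintype α]

/-- Step formula for the ratio of binomial coefficients. -/
lemma choose_ratio_step (b N m : ℕ) (hm : m < N) :
    (Nat.choose b (m+1) : ℚ) / Nat.choose N (m+1)
      = ((Nat.choose b m : ℚ) / Nat.choose N m) * (b - m : ℕ) / ((N - m : ℕ)) := by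
  have h1 := Nat.choose_succ_right_eq b m
  have h2 := Nat.choose_succ_right_eq N m
  have hC : (Nat.choose N m : ℚ) ≠ 0 := by
    exact_mod_cast (Nat.choose_pos hm.le).ne'
  have hC2 : (Nat.choose N (m+1) : ℚ) ≠ 0 := by
    exact_mod_cast (Nat.choose_pos hm).ne'
  have hNm : ((N - m : ℕ) : ℚ) ≠ 0 := by
    have : 0 < N - m := Nat.sub_pos_of_lt hm
    exact_mod_cast this.ne'
  have h1' : (Nat.choose b (m+1) : ℚ) * (m+1) = (Nat.choose b m : ℚ) * ((b - m : ℕ)) := by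
    exact_mod_cast congrArg (Nat.cast : ℕ → ℚ) h1
  have h2' : (Nat.choose N (m+1) : ℚ) * (m+1) = (Nat.choose N m : ℚ) * ((N - m : ℕ)) := by
    exact_mod_cast congrArg (Nat.cast : ℕ → ℚ) h2
  have hm1 : ((m : ℚ) + 1) ≠ 0 := by positivity
  field_simp
  nlinarith [h1', h2', sq_nonneg ((m:ℚ)+1)]

/-- The key natural-number inequality. -/
lemma key_nat (x K : ℕ) (hx : x ≤ K) (hK : 2 ≤ K) :
    x * ((K - 1) - (x - 1)) ≤ (K - x) * (K - 1) := by
  rcases Nat.eq_zero_or_pos x with h | h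
  · simp [h]
  have h2 : (K - 1) - (x - 1) = K - x := by omega
  rw [h2]
  rcases Nat.lt_or_ge x K with h' | h'
  · rw [mul_comm (K - x) (K - 1)]
    exact Nat.mul_le_mul (by omega) le_rfl
  · have hx0 : K - x = 0 := by omega
    simp [hx0]

/-- Convexity of `n ↦ C(b,n)/C(N,n)`. -/
lemma choose_ratio_convex (b N m : ℕ) (hb : b ≤ N) (hm : m + 2 ≤ N) :
    (Nat.choose b (m+1) : ℚ) / Nat.choose N (m+1)
        - (Nat.choose b (m+2) : ℚ) / Nat.choose N (m+2)
      ≤ (Nat.choose b m : ℚ) / Nat.choose N m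
        - (Nat.choose b (m+1) : ℚ) / Nat.choose N (m+1) := by
  have hm1 : m < N := by omega
  have hm2 : m + 1 < N := by omega
  have e1 := choose_ratio_step b N m hm1
  have e2 := choose_ratio_step b N (m+1) hm2
  rw [show m + 2 = (m+1)+1 from rfl, e2, e1]
  have hb1 : b - (m+1) = (b - m) - 1 := by omega
  have hN1 : N - (m+1) = (N - m) - 1 := by omega
  rw [hb1, hN1]
  set t : ℚ := (Nat.choose b m : ℚ) / Nat.choose N m with ht
  have ht0 : 0 ≤ t := by positivity
  set x : ℕ := b - m with hxdef
  set K : ℕ := N - m with hKdef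
  have hxK : x ≤ K := by omega
  have hK2 : 2 ≤ K := by omega
  set X : ℚ := ((x : ℕ) : ℚ) with hX
  set X1 : ℚ := ((x - 1 : ℕ) : ℚ) with hX1
  set Kq : ℚ := ((K : ℕ) : ℚ) with hKq
  set K1 : ℚ := ((K - 1 : ℕ) : ℚ) with hK1
  have hKpos : (0:ℚ) < Kq := by rw [hKq]; exact_mod_cast (by omega : 0 < K)
  have hK1pos : (0:ℚ) < K1 := by rw [hK1]; exact_mod_cast (by omega : 0 < K - 1)
  have key : X * (((K - 1) - (x - 1) : ℕ) : ℚ) ≤ (((K - x : ℕ)) : ℚ) * K1 := by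
    rw [hX, hK1]
    exact_mod_cast key_nat x K hxK hK2
  have hD : (((K - x : ℕ)) : ℚ) = Kq - X := by
    rw [hKq, hX]; exact Nat.cast_sub hxK
  have hE : (((K - 1) - (x - 1) : ℕ) : ℚ) = K1 - X1 := by
    rw [hK1, hX1]; exact Nat.cast_sub (by omega : x - 1 ≤ K - 1)
  rw [hD, hE] at key
  have step1 : t * (X * (K1 - X1)) ≤ t * ((Kq - X) * K1) :=
    mul_le_mul_of_nonneg_left key ht0
  have lhseq : t * X / Kq - t * X / Kq * X1 / K1 = (t * X * K1 - t * X * X1) / (Kq * K1) := by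
    field_simp
  have rhseq : t - t * X / Kq = (t * Kq - t * X) / Kq := by
    field_simp
  rw [lhseq, rhseq, div_le_div_iff₀ (by positivity) hKpos]
  calc (t * X * K1 - t * X * X1) * Kq = (t * (X * (K1 - X1))) * Kq := by ring
    _ ≤ (t * ((Kq - X) * K1)) * Kq := mul_le_mul_of_nonneg_right step1 hKpos.le
    _ = (t * Kq - t * X) * (Kq * K1) := by ring

lemma filter_not_mem (φ : Finset α → Finset α)
    (hφ : ∀ S : Finset α, φ S = S.biUnion (fun s => φ {s})) (n : ℕ) (v : α) :
    (powersetCard n (univ : Finset α)).filter (fun S => v ∉ φ S)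
      = powersetCard n (univ.filter fun s => v ∉ φ {s}) := by
  ext S
  simp only [mem_filter, mem_powersetCard, hφ S, mem_biUnion, not_exists]
  constructor
  · rintro ⟨⟨-, hcard⟩, hv⟩
    refine ⟨fun s hs => mem_filter.2 ⟨mem_univ s, fun h => hv s ⟨hs, h⟩⟩, hcard⟩
  · rintro ⟨hsub, hcard⟩
    refine ⟨⟨subset_univ S, hcard⟩, ?_⟩
    rintro s ⟨hs, hmem⟩
    exact (mem_filter.1 (hsub hs)).2 hmem

lemma sum_card_eq (φ : Finset α → Finset α)
    (hφ : ∀ S : Finset α, φ S = S.biUnion (fun s => φ {s})) (n : ℕ) :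
    ∑ S ∈ powersetCard n (univ : Finset α), ((φ S).card : ℚ)
      = ∑ v : α, (((Fintype.card α).choose n : ℚ)
          - (((univ.filter fun s => v ∉ φ {s}).card.choose n : ℚ))) := by
  have hcard : ∀ S : Finset α, ((φ S).card : ℚ)
      = ∑ v : α, if v ∈ φ S then (1:ℚ) else 0 := by
    intro S
    rw [sum_boole]
    congr 2
    exact (filter_univ_mem (φ S)).symm
  simp_rw [hcard]
  rw [Finset.sum_comm]
  refine sum_congr rfl fun v _ => ?_
  rw [sum_boole]
  have hsplit := card_filter_add_card_filter_not
    (s := powersetCard n (univ : Finset α)) (fun S => v ∈ φ S)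
  rw [filter_not_mem φ hφ n v] at hsplit
  rw [card_powersetCard, card_powersetCard, card_univ] at hsplit
  have := congrArg (Nat.cast : ℕ → ℚ) hsplit
  push_cast at this
  linarith

lemma Ef_eq (φ : Finset α → Finset α)
    (hφ : ∀ S : Finset α, φ S = S.biUnion (fun s => φ {s}))
    {n : ℕ} (hn : n ≤ Fintype.card α) :
    Ef φ n = ∑ v : α, (1 -
      (((univ.filter fun s => v ∉ φ {s}).card.choose n : ℚ)
        / ((Fintype.card α).choose n : ℚ))) := by
  have h0 : ((Fintype.card α).choose n : ℚ) ≠ 0 := by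
    exact_mod_cast (Nat.choose_pos hn).ne'
  unfold Ef
  rw [sum_card_eq φ hφ n, card_powersetCard, card_univ, sum_div]
  refine sum_congr rfl fun v _ => ?_
  rw [sub_div, div_self h0]

/-- Concavity: the forward differences of `n ↦ E[|φ(S_n)|]` are nonincreasing. -/
theorem Ef_concave (φ : Finset α → Finset α)
    (hφ : ∀ S : Finset α, φ S = S.biUnion (fun s => φ {s}))
    (hempty : φ ∅ = ∅)
    (n : ℕ) (h1 : 1 ≤ n) (hn : n + 1 ≤ Fintype.card α) :
    Ef φ (n + 1) - Ef φ n ≤ Ef φ n - Ef φ (n - 1) := by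
  obtain ⟨m, rfl⟩ : ∃ m, n = m + 1 := ⟨n - 1, by omega⟩
  have hm2 : m + 2 ≤ Fintype.card α := by omega
  have hmsub : m + 1 - 1 = m := by omega
  rw [hmsub]
  rw [Ef_eq φ hφ (by omega : m ≤ Fintype.card α),
      Ef_eq φ hφ (by omega : m + 1 ≤ Fintype.card α),
      Ef_eq φ hφ (by omega : m + 1 + 1 ≤ Fintype.card α)]
  rw [← Finset.sum_sub_distrib, ← Finset.sum_sub_distrib]
  refine Finset.sum_le_sum fun v _ => ?_
  set b : ℕ := (univ.filter fun s => v ∉ φ {s}).card with hbdef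
  have hb : b ≤ Fintype.card α := by
    rw [hbdef, ← card_univ]
    exact card_le_card (filter_subset _ _)
  have h := choose_ratio_convex b (Fintype.card α) m hb hm2
  have hrw : m + 1 + 1 = m + 2 := rfl
  rw [hrw]
  linarith
end

section
/- For fixed integers m ≥ d ≥ 1, the function g(n) = 1 − C(m − d, n)/C(m, n) on n ∈ {0, 1, ..., m} is concave and nondecreasing, i.e. g(n+1) − g(n) ≥ 0 and g(n+1) − g(n) is nonincreasing in n. -/
lemma nat_mono_aux (m d n : ℕ) (hdm : d ≤ m) (hn : n + 1 ≤ m) :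
    (m - d).choose (n+1) * m.choose n ≤ (m - d).choose n * m.choose (n+1) := by
  set k := m - d with hk
  set a0 := k.choose n
  set a1 := k.choose (n+1)
  set b0 := m.choose n
  set b1 := m.choose (n+1)
  have hA1 : a1 * (n+1) = a0 * (k - n) := Nat.choose_succ_right_eq k n
  have hB1 : b1 * (n+1) = b0 * (m - n) := Nat.choose_succ_right_eq m n
  refine Nat.le_of_mul_le_mul_right ?_ (show 0 < n + 1 by omega)
  have hkm : k - n ≤ m - n := by omega
  calc a1 * b0 * (n+1) = (a1 * (n+1)) * b0 := by ring
    _ = (a0 * (k - n)) * b0 := by rw [hA1]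
    _ ≤ (a0 * (m - n)) * b0 := by
        exact Nat.mul_le_mul_right b0 (Nat.mul_le_mul_left a0 hkm)
    _ = a0 * (b1 * (n+1)) := by rw [hB1]; ring
    _ = a0 * b1 * (n+1) := by ring

lemma nat_concave_aux (m d n : ℕ) (hd : 1 ≤ d) (hdm : d ≤ m) (hn : n + 2 ≤ m) :
    2 * ((m - d).choose (n+1)) * (m.choose n * m.choose (n+2)) ≤
      ((m - d).choose n * m.choose (n+2) + m.choose n * (m - d).choose (n+2)) *
        m.choose (n+1) := by
  set k := m - d with hk
  have hkm : k + 1 ≤ m := by omega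
  set a0 := k.choose n
  set a1 := k.choose (n+1)
  set a2 := k.choose (n+2)
  set b0 := m.choose n
  set b1 := m.choose (n+1)
  set b2 := m.choose (n+2)
  set K := k - n with hK
  set K1 := k - (n+1) with hK1
  set M := m - n with hM
  set M1 := m - (n+1) with hM1
  have hA1 : a1 * (n+1) = a0 * K := Nat.choose_succ_right_eq k n
  have hA2 : a2 * (n+2) = a1 * K1 := Nat.choose_succ_right_eq k (n+1)
  have hB1 : b1 * (n+1) = b0 * M := Nat.choose_succ_right_eq m n
  have hB2 : b2 * (n+2) = b1 * M1 := Nat.choose_succ_right_eq m (n+1)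
  have key : 2 * (K * M1) ≤ M * M1 + K * K1 := by
    rcases Nat.eq_zero_or_pos K with h | h
    · rw [h]; simp
    · have h1 : (K : ℤ) ≤ (M1 : ℤ) := by exact_mod_cast (by omega : K ≤ M1)
      have h2 : (M : ℤ) = (M1 : ℤ) + 1 := by exact_mod_cast (by omega : M = M1 + 1)
      have h3 : (K1 : ℤ) + 1 = (K : ℤ) := by exact_mod_cast (by omega : K1 + 1 = K)
      have : (2 : ℤ) * ((K : ℤ) * M1) ≤ (M : ℤ) * M1 + (K : ℤ) * K1 := by
        nlinarith [sq_nonneg ((M1 : ℤ) - (K1 : ℤ))]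
      exact_mod_cast this
  refine Nat.le_of_mul_le_mul_right ?_ (show 0 < (n+1) * ((n+1) * (n+2)) by positivity)
  have hL : 2 * a1 * (b0 * b2) * ((n+1) * ((n+1) * (n+2))) =
      a0 * b0 ^ 2 * M * (2 * (K * M1)) := by
    calc 2 * a1 * (b0 * b2) * ((n+1) * ((n+1) * (n+2)))
        = 2 * (a1 * (n+1)) * (b0 * ((b2 * (n+2)) * (n+1))) := by ring
      _ = 2 * (a0 * K) * (b0 * ((b1 * M1) * (n+1))) := by rw [hA1, hB2]
      _ = 2 * (a0 * K) * (b0 * ((b1 * (n+1)) * M1)) := by ring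
      _ = 2 * (a0 * K) * (b0 * ((b0 * M) * M1)) := by rw [hB1]
      _ = a0 * b0 ^ 2 * M * (2 * (K * M1)) := by ring
  have hR : (a0 * b2 + b0 * a2) * b1 * ((n+1) * ((n+1) * (n+2))) =
      a0 * b0 ^ 2 * M * (M * M1 + K * K1) := by
    calc (a0 * b2 + b0 * a2) * b1 * ((n+1) * ((n+1) * (n+2)))
        = a0 * ((b2 * (n+2)) * ((b1 * (n+1)) * (n+1)))
          + b0 * ((a2 * (n+2)) * ((b1 * (n+1)) * (n+1))) := by ring
      _ = a0 * ((b1 * M1) * ((b0 * M) * (n+1)))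
          + b0 * ((a1 * K1) * ((b0 * M) * (n+1))) := by rw [hB2, hB1, hA2]
      _ = a0 * ((b1 * (n+1)) * ((b0 * M) * M1))
          + b0 * ((a1 * (n+1)) * ((b0 * M) * K1)) := by ring
      _ = a0 * ((b0 * M) * ((b0 * M) * M1))
          + b0 * ((a0 * K) * ((b0 * M) * K1)) := by rw [hB1, hA1]
      _ = a0 * b0 ^ 2 * M * (M * M1 + K * K1) := by ring
  rw [hL, hR]
  exact Nat.mul_le_mul_left _ key

theorem intersect_prob_concave_monotone (m d : ℕ) (hd : 1 ≤ d) (hdm : d ≤ m) :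
    (∀ n, n + 1 ≤ m →
      (1 - ((m - d).choose n : ℚ) / (m.choose n : ℚ)) ≤
        (1 - ((m - d).choose (n + 1) : ℚ) / (m.choose (n + 1) : ℚ))) ∧
    (∀ n, n + 2 ≤ m →
      ((1 - ((m - d).choose (n + 2) : ℚ) / (m.choose (n + 2) : ℚ)) -
        (1 - ((m - d).choose (n + 1) : ℚ) / (m.choose (n + 1) : ℚ))) ≤
      ((1 - ((m - d).choose (n + 1) : ℚ) / (m.choose (n + 1) : ℚ)) -
        (1 - ((m - d).choose n : ℚ) / (m.choose n : ℚ)))) := by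
  constructor
  · intro n hn
    have hB0 : (0:ℚ) < (m.choose n : ℚ) := by
      exact_mod_cast Nat.choose_pos (by omega : n ≤ m)
    have hB1 : (0:ℚ) < (m.choose (n+1) : ℚ) := by
      exact_mod_cast Nat.choose_pos (by omega : n + 1 ≤ m)
    have h : ((m - d).choose (n+1) : ℚ) / (m.choose (n+1) : ℚ) ≤
        ((m - d).choose n : ℚ) / (m.choose n : ℚ) := by
      rw [div_le_div_iff₀ hB1 hB0]
      exact_mod_cast nat_mono_aux m d n hdm hn
    linarith
  · intro n hn
    have hB0 : (0:ℚ) < (m.choose n : ℚ) := by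
      exact_mod_cast Nat.choose_pos (by omega : n ≤ m)
    have hB1 : (0:ℚ) < (m.choose (n+1) : ℚ) := by
      exact_mod_cast Nat.choose_pos (by omega : n + 1 ≤ m)
    have hB2 : (0:ℚ) < (m.choose (n+2) : ℚ) := by
      exact_mod_cast Nat.choose_pos (by omega : n + 2 ≤ m)
    have h : 2 * (((m - d).choose (n+1) : ℚ) / (m.choose (n+1) : ℚ)) ≤
        ((m - d).choose n : ℚ) / (m.choose n : ℚ) +
          ((m - d).choose (n+2) : ℚ) / (m.choose (n+2) : ℚ) := by
      rw [div_add_div _ _ hB0.ne' hB2.ne', ← mul_div_assoc,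
        div_le_div_iff₀ hB1 (mul_pos hB0 hB2)]
      exact_mod_cast nat_concave_aux m d n hd hdm hn
    have e1 : n + 1 + 1 = n + 2 := by ring
    rw [e1]
    linarith
end

section
/- Shared-variate (LABOR-0) sampling covers a fixed source vertex with probability max over seeds of min(1, k/d_s), whereas independent (NS) sampling covers it with probability 1 − Π_s (1 − min(1, k/d_s)); the former is at most the latter, so the expected number of distinct sampled source vertices under LABOR-0 is at most that under Neighbor Sampling. -/
open Finset

lemma sup_le_one_sub_prod {σ : Type*} [DecidableEq σ] (A : Finset σ) (hA : A.Nonempty)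
    (p : σ → ℝ) (h0 : ∀ s, 0 ≤ p s) (h1 : ∀ s, p s ≤ 1) :
    A.sup' hA p ≤ 1 - ∏ s ∈ A, (1 - p s) := by
  rw [Finset.sup'_le_iff]
  intro b hb
  have : ∏ s ∈ A, (1 - p s) ≤ 1 - p b := by
    rw [← Finset.mul_prod_erase A _ hb]
    have hle : ∏ s ∈ A.erase b, (1 - p s) ≤ 1 :=
      Finset.prod_le_one (fun s _ => by linarith [h1 s]) (fun s _ => by linarith [h0 s])
    have hnn : 0 ≤ ∏ s ∈ A.erase b, (1 - p s) :=
      Finset.prod_nonneg (fun s _ => by linarith [h1 s])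
    nlinarith [h1 b]
  linarith

theorem labor_covers_at_most_ns {σ τ : Type*} [DecidableEq σ]
    (k : ℕ) (hk : 1 ≤ k) (d : σ → ℕ) (hd : ∀ s, 1 ≤ d s)
    (T : Finset τ) (S : τ → Finset σ) (hS : ∀ t ∈ T, (S t).Nonempty) :
    (∀ t (ht : t ∈ T),
      (S t).sup' (hS t ht) (fun s => min 1 ((k : ℝ) / (d s : ℝ))) ≤
        1 - ∏ s ∈ S t, (1 - min 1 ((k : ℝ) / (d s : ℝ)))) ∧
    (∑ t ∈ T.attach, (S t.1).sup' (hS t.1 t.2) (fun s => min 1 ((k : ℝ) / (d s : ℝ))) ≤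
      ∑ t ∈ T, (1 - ∏ s ∈ S t, (1 - min 1 ((k : ℝ) / (d s : ℝ))))) := by
  have h0 : ∀ s : σ, (0:ℝ) ≤ min 1 ((k : ℝ) / (d s : ℝ)) := fun s =>
    le_min zero_le_one (div_nonneg (Nat.cast_nonneg _) (Nat.cast_nonneg _))
  have h1 : ∀ s : σ, min 1 ((k : ℝ) / (d s : ℝ)) ≤ 1 := fun s => min_le_left _ _
  have main : ∀ t (ht : t ∈ T),
      (S t).sup' (hS t ht) (fun s => min 1 ((k : ℝ) / (d s : ℝ))) ≤
        1 - ∏ s ∈ S t, (1 - min 1 ((k : ℝ) / (d s : ℝ))) := fun t ht =>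
    sup_le_one_sub_prod (S t) (hS t ht) _ h0 h1
  refine ⟨main, ?_⟩
  rw [← Finset.sum_attach T (fun t => 1 - ∏ s ∈ S t, (1 - min 1 ((k : ℝ) / (d s : ℝ))))]
  exact Finset.sum_le_sum fun t _ => main t.1 t.2
end
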